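/- Let λ₀ ∈ ℂ with λ₀ ≠ 0, and let λ₁ ∈ Λ¹V, λ₂ ∈ Λ²V, λ₃ ∈ Λ³V, λ₄ ∈ Λ⁴V, λ₅ ∈ Λ⁵V. Then the system of gravitational-spinor equations (E1) λ₀λ₅ + λ₁∧λ₄ − λ₂∧λ₃ = 0, (E2) −2λ₀λ₄ − 2λ₁∧λ₃ + λ₂∧λ₂ = 0, and (E3) −2ι_φ(λ₁)λ₅ + 2ι_φ(λ₂)∧λ₄ + ι_φ(λ₃)∧λ₃ = 0 for every φ ∈ V*, holds if and only if λ₄ = (λ₂∧λ₂ − 2λ₁∧λ₃)/(2λ₀), λ₅ = (λ₂∧λ₃ − λ₁∧λ₄)/λ₀, and (ι_φτ₃)∧τ₃ = 0 for every φ ∈ V*, where τ₃ = λ₃ − (1/λ₀)·λ₁∧λ₂. -/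

import Mathlib

/-!
Writing `λ₁ = ι v`, equations (E1) and (E2) are linear in `λ₅` and `λ₄` with the invertible
coefficient `λ₀`, so they are equivalent to the two formulas. After substituting these, the
left-hand side of (E3) and `ι_φ τ₃ ∧ τ₃` agree modulo `v ∧ v = 0`, the centrality of 2-forms and
two identities that hold because `dim V = 5`: applying the derivation `ι_φ` to the vanishing
6-forms `λ₂ ∧ λ₂ ∧ λ₂` and `v ∧ λ₂ ∧ λ₃` gives `ι_φ λ₂ ∧ λ₂ ∧ λ₂ = 0` and
`v ∧ ι_φ(λ₂ ∧ λ₃) = φ(v) λ₂ ∧ λ₃`.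
-/

noncomputable section

/-- The exterior algebra `Λ(V)` of `V = ℂ⁵`. -/
abbrev E5 : Type := ExteriorAlgebra ℂ (Fin 5 → ℂ)

/-- Contraction (interior product) `ι_φ` with a linear functional `φ ∈ V*`. -/
def ctrC (φ : Module.Dual ℂ (Fin 5 → ℂ)) : E5 →ₗ[ℂ] E5 :=
  CliffordAlgebra.contractLeft (Q := (0 : QuadraticForm ℂ (Fin 5 → ℂ))) φ

open CliffordAlgebra (contractLeft contractLeft_ι contractLeft_ι_mul contractLeft_algebraMap
  contractLeft_algebraMap_mul)

local infixr:75 "⌋" => contractLeft (Q := 0)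

namespace ExteriorAlgebra

section CommRing

variable {R M : Type*} [CommRing R] [AddCommGroup M] [Module R M]

theorem exists_ι_eq_of_mem_exteriorPower_one {x : ExteriorAlgebra R M} (hx : x ∈ ⋀[R]^1 M) :
    ∃ m, ι R m = x := by
  rwa [exteriorPower, pow_one] at hx

theorem ι_mem_exteriorPower_one (m : M) : ι R m ∈ ⋀[R]^1 M := by
  rw [exteriorPower, pow_one]
  exact LinearMap.mem_range_self _ m

theorem ι_mul_ι_anticomm (m n : M) : ι R n * ι R m = -(ι R m * ι R n) :=
  eq_neg_of_add_eq_zero_left (by rw [add_comm, ι_add_mul_swap])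

theorem commute_ι_of_mem_exteriorPower_two {x : ExteriorAlgebra R M} (hx : x ∈ ⋀[R]^2 M)
    (m : M) : Commute x (ι R m) := by
  rw [exteriorPower, pow_two] at hx
  induction hx using Submodule.mul_induction_on' with
  | mem_mul_mem a ha b hb =>
    obtain ⟨a, rfl⟩ := ha
    obtain ⟨b, rfl⟩ := hb
    simp only [Commute, SemiconjBy, mul_assoc, ι_mul_ι_anticomm m, mul_neg]
    simp only [← mul_assoc, ι_mul_ι_anticomm m, neg_mul, neg_neg]
  | add x _ y _ hx hy => exact hx.add_left hy

theorem commute_of_mem_exteriorPower_two {x : ExteriorAlgebra R M} (hx : x ∈ ⋀[R]^2 M)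
    (y : ExteriorAlgebra R M) : Commute x y := by
  induction y using ExteriorAlgebra.induction with
  | algebraMap r => exact Algebra.commute_algebraMap_right r x
  | ι m => exact commute_ι_of_mem_exteriorPower_two hx m
  | mul a b ha hb => exact ha.mul_right hb
  | add a b ha hb => exact ha.add_right hb

theorem contractLeft_mem_exteriorPower (φ : Module.Dual R M) {n : ℕ} {x : ExteriorAlgebra R M}
    (hx : x ∈ ⋀[R]^(n + 1) M) : φ⌋x ∈ ⋀[R]^n M := by
  rw [exteriorPower, pow_succ'] at hx
  induction hx using Submodule.mul_induction_on' with
  | mem_mul_mem a ha b hb =>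
    obtain ⟨m, rfl⟩ := ha
    rw [contractLeft_ι_mul]
    refine Submodule.sub_mem _ (Submodule.smul_mem _ _ hb) ?_
    cases n with
    | zero =>
      rw [pow_zero, Submodule.mem_one] at hb
      obtain ⟨r, rfl⟩ := hb
      rw [contractLeft_algebraMap, mul_zero]
      exact Submodule.zero_mem _
    | succ n =>
      rw [exteriorPower, pow_succ']
      exact Submodule.mul_mem_mul (LinearMap.mem_range_self _ m)
        (contractLeft_mem_exteriorPower φ hb)
  | add x _ y _ hx hy => exact map_add (contractLeft φ) x y ▸ Submodule.add_mem _ hx hy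

theorem contractLeft_mul_of_mem_exteriorPower (φ : Module.Dual R M) {n : ℕ}
    {x : ExteriorAlgebra R M} (hx : x ∈ ⋀[R]^n M) (y : ExteriorAlgebra R M) :
    φ⌋(x * y) = φ⌋x * y + (-1 : R) ^ n • (x * φ⌋y) := by
  induction hx using Submodule.pow_induction_on_left' generalizing y with
  | algebraMap r =>
    rw [contractLeft_algebraMap_mul, contractLeft_algebraMap, Algebra.algebraMap_eq_smul_one]
    simp
  | add x x' i _ _ hx hx' =>
    simp only [add_mul, map_add, hx, hx', smul_add]
    abel
  | mem_mul a ha i x _ ih =>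
    obtain ⟨m, rfl⟩ := ha
    rw [mul_assoc, contractLeft_ι_mul, contractLeft_ι_mul, ih, pow_succ]
    simp only [mul_add, sub_mul, smul_mul_assoc, mul_smul_comm, mul_neg_one, neg_smul,
      ← mul_assoc]
    abel

theorem ι_mul_contractLeft_eq_smul_of_ι_mul_eq_zero (φ : Module.Dual R M) {m : M}
    {x : ExteriorAlgebra R M} (h : ι R m * x = 0) : ι R m * φ⌋x = φ m • x := by
  have h' := congrArg (φ⌋·) h
  rwa [contractLeft_ι_mul, map_zero, sub_eq_zero, eq_comm] at h'

end CommRing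

section Field

variable {K V : Type*} [Field K] [AddCommGroup V] [Module K V] [FiniteDimensional K V]

theorem exteriorPower_eq_bot_of_finrank_lt {n : ℕ} (h : Module.finrank K V < n) :
    ⋀[K]^n V = ⊥ :=
  Submodule.finrank_eq_zero.mp (by rw [exteriorPower.finrank_eq, Nat.choose_eq_zero_of_lt h])

theorem mul_eq_zero_of_finrank_lt {i j : ℕ} (h : Module.finrank K V < i + j)
    {x y : ExteriorAlgebra K V} (hx : x ∈ ⋀[K]^i V) (hy : y ∈ ⋀[K]^j V) : x * y = 0 := by
  have hxy : x * y ∈ ⋀[K]^(i + j) V := SetLike.mul_mem_graded hx hy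
  rwa [exteriorPower_eq_bot_of_finrank_lt h, Submodule.mem_bot] at hxy

theorem contractLeft_mul_mul_self_eq_zero [CharZero K] (hV : Module.finrank K V ≤ 5)
    (φ : Module.Dual K V) {x : ExteriorAlgebra K V} (hx : x ∈ ⋀[K]^2 V) :
    φ⌋x * (x * x) = 0 := by
  have hcube : x * (x * x) = 0 :=
    mul_eq_zero_of_finrank_lt (i := 2) (j := 4) (by omega) hx (SetLike.mul_mem_graded hx hx)
  have hleib : ∀ y, φ⌋(x * y) = φ⌋x * y + x * φ⌋y := by
    simpa using contractLeft_mul_of_mem_exteriorPower φ hx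
  have hcomm : x * φ⌋x = φ⌋x * x := commute_of_mem_exteriorPower_two hx _
  have h3 : (3 : K) • (φ⌋x * x * x) = 0 := by
    have h := congrArg (φ⌋·) hcube
    rw [hleib, hleib, map_zero] at h
    simp only [mul_add, hcomm, ← mul_assoc] at h
    rw [← h]
    module
  rw [← mul_assoc]
  exact (smul_eq_zero.mp h3).resolve_left three_ne_zero

theorem gravSpinorE3_eq_contractLeft_mul_self [CharZero K] (hV : Module.finrank K V ≤ 5)
    (l₀ : K) (v : V) {l₂ l₃ l₄ l₅ : ExteriorAlgebra K V} (h₂ : l₂ ∈ ⋀[K]^2 V)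
    (h₃ : l₃ ∈ ⋀[K]^3 V) (h₄ : l₄ = (2 * l₀)⁻¹ • (l₂ * l₂ - 2 • (ι K v * l₃)))
    (h₅ : l₅ = l₀⁻¹ • (l₂ * l₃ - ι K v * l₄)) (φ : Module.Dual K V) :
    -(2 • (φ⌋(ι K v) * l₅)) + 2 • (φ⌋l₂ * l₄) + φ⌋l₃ * l₃ =
      φ⌋(l₃ - l₀⁻¹ • (ι K v * l₂)) * (l₃ - l₀⁻¹ • (ι K v * l₂)) := by
  obtain ⟨w, hw⟩ := exists_ι_eq_of_mem_exteriorPower_one (contractLeft_mem_exteriorPower φ h₂)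
  have hvv : ∀ X, ι K v * (ι K v * X) = 0 := fun X => by rw [← mul_assoc, ι_sq_zero, zero_mul]
  have hwv : ∀ X, ι K w * (ι K v * X) = -(ι K v * (ι K w * X)) := fun X => by
    rw [← mul_assoc, ι_mul_ι_anticomm, neg_mul, mul_assoc]
  have hcube : ι K w * (l₂ * l₂) = 0 := hw ▸ contractLeft_mul_mul_self_eq_zero hV φ h₂
  have hc₂ : l₂ * (ι K v * l₂) = ι K v * (l₂ * l₂) := by
    rw [← mul_assoc, (commute_of_mem_exteriorPower_two h₂ _).eq, mul_assoc]
  have hc₃ : φ⌋l₃ * (ι K v * l₂) = ι K v * (l₂ * φ⌋l₃) := by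
    rw [(commute_of_mem_exteriorPower_two (contractLeft_mem_exteriorPower φ h₃) _).eq,
      mul_assoc, (commute_of_mem_exteriorPower_two h₂ _).eq]
  have hvl₂l₃ : ι K v * (l₂ * l₃) = 0 :=
    mul_eq_zero_of_finrank_lt (i := 1) (j := 5) (by omega) (ι_mem_exteriorPower_one v)
      (SetLike.mul_mem_graded h₂ h₃)
  have hleib : φ⌋(l₂ * l₃) = ι K w * l₃ + l₂ * φ⌋l₃ := by
    simpa [hw] using contractLeft_mul_of_mem_exteriorPower φ h₂ l₃
  have hkey : ι K v * (l₂ * φ⌋l₃) = φ v • (l₂ * l₃) - ι K v * (ι K w * l₃) := by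
    rw [eq_sub_iff_add_eq, ← mul_add, add_comm, ← hleib,
      ι_mul_contractLeft_eq_smul_of_ι_mul_eq_zero φ hvl₂l₃]
  subst h₄ h₅
  rw [contractLeft_ι, ← Algebra.smul_def, map_sub, map_smul, contractLeft_ι_mul, ← hw, mul_inv]
  simp only [← Nat.cast_smul_eq_nsmul K, mul_sub, sub_mul, smul_sub, smul_mul_assoc,
    mul_smul_comm, smul_smul, mul_assoc, hwv, mul_neg, hvv, neg_zero, hcube, hc₂, hc₃, hkey,
    smul_zero]
  module

end Field

end ExteriorAlgebra

open ExteriorAlgebra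

theorem gravSpinor_chart_solution_general (l₀ : ℂ) (hl₀ : l₀ ≠ 0) (l₁ l₂ l₃ l₄ l₅ : E5)
    (h₁ : l₁ ∈ ⋀[ℂ]^1 (Fin 5 → ℂ)) (h₂ : l₂ ∈ ⋀[ℂ]^2 (Fin 5 → ℂ))
    (h₃ : l₃ ∈ ⋀[ℂ]^3 (Fin 5 → ℂ)) :
    (l₀ • l₅ + l₁ * l₄ - l₂ * l₃ = 0 ∧
      -(2 • (l₀ • l₄)) - 2 • (l₁ * l₃) + l₂ * l₂ = 0 ∧
      ∀ φ : Module.Dual ℂ (Fin 5 → ℂ),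
        -(2 • (ctrC φ l₁ * l₅)) + 2 • (ctrC φ l₂ * l₄) + ctrC φ l₃ * l₃ = 0) ↔
    (l₄ = (2 * l₀)⁻¹ • (l₂ * l₂ - 2 • (l₁ * l₃)) ∧
      l₅ = l₀⁻¹ • (l₂ * l₃ - l₁ * l₄) ∧
      ∀ φ : Module.Dual ℂ (Fin 5 → ℂ),
        ctrC φ (l₃ - l₀⁻¹ • (l₁ * l₂)) * (l₃ - l₀⁻¹ • (l₁ * l₂)) = 0) := by
  obtain ⟨v, rfl⟩ := exists_ι_eq_of_mem_exteriorPower_one h₁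
  have hE1 : l₀ • l₅ + ι ℂ v * l₄ - l₂ * l₃ = 0 ↔ l₅ = l₀⁻¹ • (l₂ * l₃ - ι ℂ v * l₄) := by
    rw [eq_inv_smul_iff₀ hl₀, ← sub_eq_zero (a := l₀ • l₅)]
    exact Eq.congr_left (by abel)
  have hE2 : -(2 • (l₀ • l₄)) - 2 • (ι ℂ v * l₃) + l₂ * l₂ = 0 ↔
      l₄ = (2 * l₀)⁻¹ • (l₂ * l₂ - 2 • (ι ℂ v * l₃)) := by
    rw [eq_inv_smul_iff₀ (mul_ne_zero two_ne_zero hl₀), ← sub_eq_zero (a := (2 * l₀) • l₄),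
      ← neg_eq_zero (a := _ - _)]
    exact Eq.congr_left (by module)
  rw [hE1, hE2, and_left_comm]
  refine and_congr_right fun h₄ => and_congr_right fun h₅ => forall_congr' fun φ => ?_
  rw [ctrC, gravSpinorE3_eq_contractLeft_mul_self (by simp) l₀ v h₂ h₃ h₄ h₅ φ]

/-- for `λ₀ ∈ ℂ`, `λ₀ ≠ 0` and `λ_k ∈ ΛᵏV` (`k = 1,…,5`, `V = ℂ⁵`), the
gravitational-spinor equations
(E1) `λ₀λ₅ + λ₁∧λ₄ − λ₂∧λ₃ = 0`,
(E2) `−2λ₀λ₄ − 2λ₁∧λ₃ + λ₂∧λ₂ = 0`,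
(E3) `−2ι_φ(λ₁)λ₅ + 2ι_φ(λ₂)∧λ₄ + ι_φ(λ₃)∧λ₃ = 0` for every `φ ∈ V*`,
hold iff `λ₄ = (λ₂∧λ₂ − 2λ₁∧λ₃)/(2λ₀)`, `λ₅ = (λ₂∧λ₃ − λ₁∧λ₄)/λ₀` and
`(ι_φτ₃)∧τ₃ = 0` for every `φ ∈ V*`, where `τ₃ = λ₃ − (1/λ₀)·λ₁∧λ₂`. -/
theorem gravSpinor_chart_solution (l₀ : ℂ) (hl₀ : l₀ ≠ 0) (l₁ l₂ l₃ l₄ l₅ : E5)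
    (h₁ : l₁ ∈ ⋀[ℂ]^1 (Fin 5 → ℂ)) (h₂ : l₂ ∈ ⋀[ℂ]^2 (Fin 5 → ℂ))
    (h₃ : l₃ ∈ ⋀[ℂ]^3 (Fin 5 → ℂ)) (h₄ : l₄ ∈ ⋀[ℂ]^4 (Fin 5 → ℂ))
    (h₅ : l₅ ∈ ⋀[ℂ]^5 (Fin 5 → ℂ)) :
    (l₀ • l₅ + l₁ * l₄ - l₂ * l₃ = 0 ∧
      -(2 • (l₀ • l₄)) - 2 • (l₁ * l₃) + l₂ * l₂ = 0 ∧
      ∀ φ : Module.Dual ℂ (Fin 5 → ℂ),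
        -(2 • (ctrC φ l₁ * l₅)) + 2 • (ctrC φ l₂ * l₄) + ctrC φ l₃ * l₃ = 0) ↔
    (l₄ = (2 * l₀)⁻¹ • (l₂ * l₂ - 2 • (l₁ * l₃)) ∧
      l₅ = l₀⁻¹ • (l₂ * l₃ - l₁ * l₄) ∧
      ∀ φ : Module.Dual ℂ (Fin 5 → ℂ),
        ctrC φ (l₃ - l₀⁻¹ • (l₁ * l₂)) * (l₃ - l₀⁻¹ • (l₁ * l₂)) = 0) :=
  gravSpinor_chart_solution_general l₀ hl₀ l₁ l₂ l₃ l₄ l₅ h₁ h₂ h₃
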